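/- If the conclusion of any rule of the one-sided labelled calculus LS1K extended with the 3-1-transitivity rule is a labelled rooted directed acyclic graph, then each premise of that rule instance is also a labelled rooted directed acyclic graph. -/

import Mathlib

/-- One-sided modal formulas in negation normal form. -/
inductive MFml : Type where
  | pos : ℕ → MFml
  | neg : ℕ → MFml
  | and : MFml → MFml → MFml
  | or : MFml → MFml → MFml
  | box : MFml → MFml
  | dia : MFml → MFml
deriving DecidableEq

/-- A one-sided labelled sequent: a relation set `R` and a multiset `Γ` of
labelled formulae. -/
abbrev LSeq (V : Type) [DecidableEq V] := Finset (V × V) × Multiset (V × MFml)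

/-- A state variable occurs in a one-sided labelled sequent. -/
def occursIn {V : Type} [DecidableEq V] (S : LSeq V) (v : V) : Prop :=
  (∃ w, (v, w) ∈ S.1 ∨ (w, v) ∈ S.1) ∨ (∃ A, (v, A) ∈ S.2)

/-- The sequent, viewed as a directed graph on its state variables, is a labelled
rooted directed acyclic graph: some occurring variable reaches every occurring
variable, and there are no directed cycles. -/
def IsLrDAG {V : Type} [DecidableEq V] (S : LSeq V) : Prop :=
  (∃ r, occursIn S r ∧
    ∀ v, occursIn S v → Relation.ReflTransGen (fun a b => (a, b) ∈ S.1) r v) ∧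
  (∀ v, ¬ Relation.TransGen (fun a b => (a, b) ∈ S.1) v v)

/-- `Step prems concl`: the list `prems` of premises and the sequent `concl` form an
instance of a rule of the one-sided labelled calculus LS1K extended with the
3-1-transitivity rule. -/
inductive Step {V : Type} [DecidableEq V] : List (LSeq V) → LSeq V → Prop where
  | init (R : Finset (V × V)) (Γ : Multiset (V × MFml)) (x : V) (p : ℕ) :
      Step [] (R, (x, MFml.pos p) ::ₘ (x, MFml.neg p) ::ₘ Γ)
  | box (R : Finset (V × V)) (Γ : Multiset (V × MFml)) (x y : V) (A : MFml)
      (hy : ¬ occursIn (R, (x, MFml.box A) ::ₘ Γ) y) :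
      Step [(insert (x, y) R, (y, A) ::ₘ Γ)] (R, (x, MFml.box A) ::ₘ Γ)
  | dia (R : Finset (V × V)) (Γ : Multiset (V × MFml)) (x y : V) (A : MFml)
      (h : (x, y) ∈ R) :
      Step [(R, (x, MFml.dia A) ::ₘ (y, A) ::ₘ Γ)] (R, (x, MFml.dia A) ::ₘ Γ)
  | and (R : Finset (V × V)) (Γ : Multiset (V × MFml)) (x : V) (A B : MFml) :
      Step [(R, (x, A) ::ₘ Γ), (R, (x, B) ::ₘ Γ)] (R, (x, MFml.and A B) ::ₘ Γ)
  | or (R : Finset (V × V)) (Γ : Multiset (V × MFml)) (x : V) (A B : MFml) :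
      Step [(R, (x, A) ::ₘ (x, B) ::ₘ Γ)] (R, (x, MFml.or A B) ::ₘ Γ)
  | t31 (R : Finset (V × V)) (Γ : Multiset (V × MFml)) (x y z w : V)
      (h₁ : (x, y) ∈ R) (h₂ : (y, z) ∈ R) (h₃ : (z, w) ∈ R) :
      Step [(insert (x, w) R, Γ)] (R, Γ)

/-!
A premise of a propositional rule or of (◇) has the same relation set as the conclusion and
the same state variables, since the principal formula is labelled by a variable that persists
and the `y` of (◇) already occurs in `Rxy`. The (t³₁) premise adds the edge `x → w`, which is
shortcut by the path `x → y → z → w` of the conclusion, so it creates no cycle and loses no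
reachability. The (□) premise hangs a fresh leaf `y` below `x`; a fresh vertex has no outgoing
edge, so it lies on no cycle, and it is reached through `x`.
-/

open Relation

namespace Relation

variable {α : Type*} {r r' : α → α → Prop} {y : α}

theorem TransGen.eq_or_transGen_of_sink (hr : ∀ a b, r' a b → r a b ∨ b = y)
    (hy : ∀ b, ¬ r' y b) {a b : α} (h : TransGen r' a b) : b = y ∨ TransGen r a b := by
  induction h with
  | single hab => exact (hr _ _ hab).symm.imp_right .single
  | @tail c b _ hcb ih =>
    obtain rfl | hac := ih
    · exact (hy _ hcb).elim
    · exact (hr _ _ hcb).symm.imp_right hac.tail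

theorem not_transGen_self_of_sink (hr : ∀ a b, r' a b → r a b ∨ b = y)
    (hy : ∀ b, ¬ r' y b) (hacyc : ∀ v, ¬ TransGen r v v) (v : α) : ¬ TransGen r' v v := by
  intro hv
  obtain rfl | hv' := hv.eq_or_transGen_of_sink hr hy
  · obtain ⟨b, hyb, -⟩ := TransGen.head'_iff.mp hv
    exact hy b hyb
  · exact hacyc v hv'

end Relation

section Occurrence

variable {V : Type} [DecidableEq V] {R : Finset (V × V)} {Γ : Multiset (V × MFml)}
  {a b v : V}

theorem occursIn_cons {x : V} {A : MFml} :
    occursIn (R, (x, A) ::ₘ Γ) v ↔ v = x ∨ occursIn (R, Γ) v := by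
  simp only [occursIn, Multiset.mem_cons, Prod.ext_iff, exists_or, exists_and_left,
    exists_eq]
  tauto

theorem occursIn_insert :
    occursIn (insert (a, b) R, Γ) v ↔ v = a ∨ v = b ∨ occursIn (R, Γ) v := by
  simp only [occursIn, Finset.mem_insert, Prod.ext_iff, exists_or, exists_and_left,
    exists_and_right, exists_eq, and_true, true_and]
  tauto

theorem occursIn_fst_of_mem (h : (a, b) ∈ R) : occursIn (R, Γ) a :=
  .inl ⟨b, .inl h⟩

theorem occursIn_snd_of_mem (h : (a, b) ∈ R) : occursIn (R, Γ) b :=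
  .inl ⟨a, .inr h⟩

end Occurrence

namespace IsLrDAG

variable {V : Type} [DecidableEq V] {R R' : Finset (V × V)} {Γ Γ' : Multiset (V × MFml)}

theorem of_subset_of_transGen (hc : IsLrDAG (R, Γ)) (hsub : R ⊆ R')
    (hpath : ∀ a b, (a, b) ∈ R' → TransGen (fun a b => (a, b) ∈ R) a b)
    (hocc : ∀ v, occursIn (R', Γ') v ↔ occursIn (R, Γ) v) : IsLrDAG (R', Γ') := by
  obtain ⟨⟨r, hr, hreach⟩, hacyc⟩ := hc
  refine ⟨⟨r, (hocc r).mpr hr, fun v hv => ?_⟩, fun v hv => hacyc v ?_⟩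
  · exact ReflTransGen.mono (fun a b hab => hsub hab) _ _ (hreach v ((hocc v).mp hv))
  · exact TransGen.closed hpath _ _ hv

theorem of_occursIn_iff (hc : IsLrDAG (R, Γ))
    (hocc : ∀ v, occursIn (R, Γ') v ↔ occursIn (R, Γ) v) : IsLrDAG (R, Γ') :=
  hc.of_subset_of_transGen subset_rfl (fun _ _ hab => .single hab) hocc

theorem insert_of_transGen {x w : V} (hc : IsLrDAG (R, Γ))
    (hxw : TransGen (fun a b => (a, b) ∈ R) x w) : IsLrDAG (insert (x, w) R, Γ) := by
  refine hc.of_subset_of_transGen (Finset.subset_insert _ _) (fun a b hab => ?_) fun v => ?_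
  · rw [Finset.mem_insert, Prod.mk.injEq] at hab
    obtain ⟨rfl, rfl⟩ | hab := hab
    · exact hxw
    · exact .single hab
  · obtain ⟨_, hx, -⟩ := TransGen.head'_iff.mp hxw
    obtain ⟨_, -, hw⟩ := TransGen.tail'_iff.mp hxw
    rw [occursIn_insert, or_iff_right_of_imp (a := v = w) fun h => h ▸ occursIn_snd_of_mem hw,
      or_iff_right_of_imp (a := v = x) fun h => h ▸ occursIn_fst_of_mem hx]

theorem insert_fresh_leaf {x y : V} (hc : IsLrDAG (R, Γ)) (hx : occursIn (R, Γ) x)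
    (hy : ¬ occursIn (R, Γ) y)
    (hocc : ∀ v, occursIn (insert (x, y) R, Γ') v ↔ v = y ∨ occursIn (R, Γ) v) :
    IsLrDAG (insert (x, y) R, Γ') := by
  obtain ⟨⟨r, hr, hreach⟩, hacyc⟩ := hc
  have hmono :
      ∀ v, occursIn (R, Γ) v → ReflTransGen (fun a b => (a, b) ∈ insert (x, y) R) r v :=
    fun v hv => ReflTransGen.mono (fun a b hab => Finset.mem_insert_of_mem hab) _ _ (hreach v hv)
  refine ⟨⟨r, (hocc r).mpr (.inr hr), fun v hv => ?_⟩, ?_⟩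
  · obtain rfl | hv := (hocc v).mp hv
    · exact (hmono x hx).tail (Finset.mem_insert_self _ _)
    · exact hmono v hv
  · refine not_transGen_self_of_sink (y := y) (fun a b hab => ?_) (fun b hyb => ?_) hacyc
    · rw [Finset.mem_insert, Prod.mk.injEq] at hab
      tauto
    · rw [Finset.mem_insert, Prod.mk.injEq] at hyb
      obtain ⟨rfl, -⟩ | hyb := hyb
      · exact hy hx
      · exact hy (occursIn_fst_of_mem hyb)

end IsLrDAG

/-- If the conclusion of any rule of LS1K + 3-1-transitivity is a labelled rooted
directed acyclic graph, then each premise of that rule instance is as well. -/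
theorem step_preserves_lrDAG {V : Type} [DecidableEq V]
    (prems : List (LSeq V)) (concl : LSeq V)
    (h : Step prems concl) (hc : IsLrDAG concl) :
    ∀ s ∈ prems, IsLrDAG s := by
  intro s hs
  cases h with
  | init => simp at hs
  | box R Γ x y A hy =>
    obtain rfl := List.mem_singleton.mp hs
    refine hc.insert_fresh_leaf (occursIn_cons.mpr (.inl rfl)) hy fun v => ?_
    simp only [occursIn_insert, occursIn_cons]
    tauto
  | dia R Γ x y A hxy =>
    obtain rfl := List.mem_singleton.mp hs
    have hy : occursIn (R, Γ) y := occursIn_snd_of_mem hxy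
    refine hc.of_occursIn_iff fun v => ?_
    simp only [occursIn_cons]
    rw [or_iff_right_of_imp (a := v = y) fun h => h ▸ hy]
  | and R Γ x A B =>
    simp only [List.mem_cons, List.not_mem_nil, or_false] at hs
    obtain rfl | rfl := hs <;> exact hc.of_occursIn_iff fun v => by simp only [occursIn_cons]
  | or R Γ x A B =>
    obtain rfl := List.mem_singleton.mp hs
    refine hc.of_occursIn_iff fun v => ?_
    simp only [occursIn_cons]
    tauto
  | t31 R Γ x y z w h₁ h₂ h₃ =>
    obtain rfl := List.mem_singleton.mp hs
    exact hc.insert_of_transGen (((TransGen.single h₁).tail h₂).tail h₃)
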